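/- Let H be a real normed space of dimension at least two, and fix integers n > k ≥ 2. Then the parallelogram law ‖x + y‖² + ‖x − y‖² = 2‖x‖² + 2‖y‖² holds for all x, y ∈ H (i.e. the norm of H is induced by an inner product) if and only if the identity C(n−2, k−2) · ‖x_1 + ⋯ + x_n‖² = ∑_{A ⊆ {1,…,n}, |A| = k} ‖x_A‖² − C(n−2, k−1) · ∑_{i=1}^{n} ‖x_i‖² holds for all x_1, …, x_n ∈ H, where C(m, j) denotes the binomial coefficient m choose j. -/

import Mathlib

/-!
By the Jordan–von Neumann theorem (`InnerProductSpace.ofNorm`) the parallelogram law gives an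
inner product, so `‖x_A‖² = ∑_{i,j ∈ A} ⟪x_i, x_j⟫`. A pair `i ≠ j` lies in `C(n-2, k-2)` of
the `k`-subsets and a single index in `C(n-1, k-1) = C(n-2, k-2) + C(n-2, k-1)` of them; summing
over `A` gives the identity. Conversely, for `x = (u, v, -v, 0, …, 0)` the value `‖x_A‖²`
depends only on the trace of `A` on the first three indices; counting the `k`-subsets with a
given trace reduces the identity to `C(n-3, k-2) (‖u+v‖² + ‖u-v‖² - 2‖u‖² - 2‖v‖²) = 0`, and
`C(n-3, k-2) > 0` because `k < n`.
-/

open Finset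

section Traces

variable {ι : Type*} [DecidableEq ι]

theorem sum_comp_inter_eq_sum_powerset {M : Type*} [AddCommMonoid M] (𝒜 : Finset (Finset ι))
    (T : Finset ι) (f : Finset ι → M) :
    ∑ A ∈ 𝒜, f (A ∩ T) = ∑ S ∈ T.powerset, #{A ∈ 𝒜 | A ∩ T = S} • f S := by
  rw [← sum_fiberwise_of_maps_to' (g := (· ∩ T)) (t := T.powerset) (by simp)]
  simp_rw [sum_const]

theorem card_filter_superset_eq_add (𝒜 : Finset (Finset ι)) {T : Finset ι} {t : ι} (ht : t ∉ T) :
    #{A ∈ 𝒜 | T ⊆ A} = #{A ∈ 𝒜 | A ∩ insert t T = T} + #{A ∈ 𝒜 | insert t T ⊆ A} := by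
  rw [← card_filter_add_card_filter_not (s := {A ∈ 𝒜 | T ⊆ A}) (fun A => t ∉ A), filter_filter,
    filter_filter]
  congr 2 <;> refine filter_congr fun A _ => ?_
  · refine ⟨fun ⟨hTA, htA⟩ => by rw [inter_insert_of_notMem htA, inter_eq_right.2 hTA],
      fun hA => ⟨hA ▸ inter_subset_left, fun htA => ht ?_⟩⟩
    exact hA ▸ mem_inter.2 ⟨htA, mem_insert_self t T⟩
  · rw [not_not, insert_subset_iff, and_comm]

variable [Fintype ι]

theorem card_filter_powersetCard_inter_eq {k : ℕ} {S T : Finset ι} (hST : S ⊆ T)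
    (hSk : #S ≤ k) :
    #{A ∈ powersetCard k univ | A ∩ T = S} = (Fintype.card ι - #T).choose (k - #S) := by
  rw [← card_compl, ← card_powersetCard]
  have disj {B : Finset ι} (hB : B ⊆ Tᶜ) : Disjoint B T := subset_compl_iff_disjoint_right.1 hB
  refine card_nbij' (· \ T) (· ∪ S) ?_ ?_ ?_ ?_
  · intro A hA
    simp only [mem_coe, mem_filter, mem_powersetCard, subset_univ, true_and] at hA ⊢
    have := card_sdiff_add_card_inter A T
    rw [hA.2] at this
    exact ⟨fun i hi => by simp [(mem_sdiff.1 hi).2], by omega⟩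
  · intro B hB
    simp only [mem_coe, mem_filter, mem_powersetCard, subset_univ, true_and] at hB ⊢
    rw [card_union_of_disjoint ((disj hB.1).mono_right hST), union_inter_distrib_right,
      inter_eq_left.2 hST, disjoint_iff_inter_eq_empty.1 (disj hB.1), empty_union]
    exact ⟨by omega, rfl⟩
  · intro A hA
    simp only [mem_coe, mem_filter] at hA
    simp [← hA.2, sdiff_union_inter]
  · intro B hB
    simp only [mem_coe, mem_powersetCard] at hB
    simp [union_sdiff_distrib, (disj hB.1).sdiff_eq_left, sdiff_eq_empty_iff_subset.2 hST]

theorem card_filter_powersetCard_superset {k : ℕ} {T : Finset ι} (hT : #T ≤ k) :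
    #{A ∈ powersetCard k univ | T ⊆ A} = (Fintype.card ι - #T).choose (k - #T) := by
  simp_rw [← inter_eq_right]
  exact card_filter_powersetCard_inter_eq subset_rfl hT

theorem card_filter_powersetCard_superset_insert_add {k : ℕ} {T : Finset ι} {t : ι} (ht : t ∉ T)
    (hT : #T ≤ k) :
    #{A ∈ powersetCard k univ | insert t T ⊆ A} + (Fintype.card ι - (#T + 1)).choose (k - #T) =
      (Fintype.card ι - #T).choose (k - #T) := by
  rw [← card_filter_powersetCard_superset hT, card_filter_superset_eq_add _ ht,
    card_filter_powersetCard_inter_eq (subset_insert t T) hT, card_insert_of_notMem ht, add_comm]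

end Traces

section InnerProduct

variable {ι : Type*} [Fintype ι] [DecidableEq ι]

theorem card_filter_powersetCard_mem_and_mem {k : ℕ} (hk : 2 ≤ k) (hι : 2 ≤ Fintype.card ι)
    (i j : ι) :
    #{A ∈ powersetCard k univ | i ∈ A ∧ j ∈ A} =
      (Fintype.card ι - 2).choose (k - 2) +
        if i = j then (Fintype.card ι - 2).choose (k - 1) else 0 := by
  obtain ⟨m, hm⟩ := Nat.exists_eq_add_of_le' hι
  obtain ⟨l, rfl⟩ := Nat.exists_eq_add_of_le' hk
  rcases eq_or_ne i j with rfl | hij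
  · have h := card_filter_powersetCard_superset (k := l + 2) (T := {i}) (by simp)
    simp only [singleton_subset_iff, card_singleton, hm] at h
    simp [h, hm, Nat.choose_succ_succ]
  · have h := card_filter_powersetCard_superset (k := l + 2) (T := {i, j})
      (by rw [card_pair hij]; omega)
    simp only [insert_subset_iff, singleton_subset_iff, card_pair hij, hm] at h
    simp [h, hm, hij]

theorem sum_powersetCard_sum_sum {M : Type*} [AddCommMonoid M] {k : ℕ} (hk : 2 ≤ k)
    (hι : 2 ≤ Fintype.card ι) (g : ι → ι → M) :
    ∑ A ∈ powersetCard k univ, ∑ i ∈ A, ∑ j ∈ A, g i j =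
      (Fintype.card ι - 2).choose (k - 2) • ∑ i, ∑ j, g i j +
        (Fintype.card ι - 2).choose (k - 1) • ∑ i, g i i := by
  calc ∑ A ∈ powersetCard k univ, ∑ i ∈ A, ∑ j ∈ A, g i j
      = ∑ i, ∑ j, #{A ∈ powersetCard k univ | i ∈ A ∧ j ∈ A} • g i j := by
        rw [sum_comm' (s' := fun i => {A ∈ powersetCard k univ | i ∈ A}) (t' := univ) (by simp)]
        refine sum_congr rfl fun i _ => ?_
        rw [sum_comm' (s' := fun j => {A ∈ powersetCard k univ | i ∈ A ∧ j ∈ A}) (t' := univ)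
          (by simp only [mem_filter, mem_powersetCard, subset_univ, true_and, mem_univ, and_true]
              tauto)]
        simp_rw [sum_const]
    _ = _ := by
        simp only [card_filter_powersetCard_mem_and_mem hk hι, add_smul, ite_smul, zero_smul,
          sum_add_distrib, sum_ite_eq, mem_univ, if_true, smul_sum]

theorem sum_powersetCard_norm_sum_sq {E : Type*} [NormedAddCommGroup E] [InnerProductSpace ℝ E]
    {k : ℕ} (hk : 2 ≤ k) (hι : 2 ≤ Fintype.card ι) (x : ι → E) :
    ∑ A ∈ powersetCard k univ, ‖∑ i ∈ A, x i‖ ^ 2 =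
      (Fintype.card ι - 2).choose (k - 2) * ‖∑ i, x i‖ ^ 2 +
        (Fintype.card ι - 2).choose (k - 1) * ∑ i, ‖x i‖ ^ 2 := by
  have norm_sum_sq (s : Finset ι) :
      ‖∑ i ∈ s, x i‖ ^ 2 = ∑ i ∈ s, ∑ j ∈ s, inner ℝ (x i) (x j) := by
    rw [← real_inner_self_eq_norm_sq, sum_inner]
    simp_rw [inner_sum]
  simp_rw [norm_sum_sq, sum_powersetCard_sum_sum hk hι, nsmul_eq_mul,
    real_inner_self_eq_norm_sq]

end InnerProduct

section Parallelogram

variable {ι : Type*} [Fintype ι] [DecidableEq ι] {E : Type*} [SeminormedAddCommGroup E]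

theorem sum_powersetCard_norm_sum_single_add_single_sub_single {k : ℕ} (hk : 2 ≤ k)
    {a b c : ι} (hab : a ≠ b) (hac : a ≠ c) (hbc : b ≠ c) (u v : E) :
    ∑ A ∈ powersetCard k univ,
        ‖∑ i ∈ A, (Pi.single a u + Pi.single b v - Pi.single c v : ι → E) i‖ ^ 2 +
        (Fintype.card ι - 3).choose (k - 2) * ‖u‖ ^ 2 =
      (Fintype.card ι - 3).choose (k - 1) * (‖u‖ ^ 2 + 2 * ‖v‖ ^ 2) +
        (Fintype.card ι - 3).choose (k - 2) * (‖u + v‖ ^ 2 + ‖u - v‖ ^ 2) +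
          (Fintype.card ι - 2).choose (k - 2) * ‖u‖ ^ 2 := by
  set T : Finset ι := {c, a, b} with hT
  have hT3 : #T = 3 := by simp [T, hab, hac.symm, hbc.symm]
  have hsingle (i : ι) (hi : i ∈ T) :
      #{A ∈ powersetCard k univ | A ∩ T = {i}} = (Fintype.card ι - 3).choose (k - 1) := by
    rw [card_filter_powersetCard_inter_eq (singleton_subset_iff.2 hi)
      (by rw [card_singleton]; omega), hT3,
      card_singleton]
  have hpair (i : ι) (hi : i ∈ T) (j : ι) (hj : j ∈ T) (hij : i ≠ j) :
      #{A ∈ powersetCard k univ | A ∩ T = {i, j}} = (Fintype.card ι - 3).choose (k - 2) := by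
    rw [card_filter_powersetCard_inter_eq (by simp [insert_subset_iff, hi, hj])
      (by rw [card_pair hij]; omega), hT3, card_pair hij]
  have htriple : #{A ∈ powersetCard k univ | T ⊆ A} + (Fintype.card ι - 3).choose (k - 2) =
      (Fintype.card ι - 2).choose (k - 2) := by
    simpa [card_pair hab] using card_filter_powersetCard_superset_insert_add (k := k)
      (T := {a, b}) (t := c) (by simp [hac.symm, hbc.symm]) (by rw [card_pair hab]; omega)
  have htrace (A : Finset ι) :
      ‖∑ i ∈ A, (Pi.single a u + Pi.single b v - Pi.single c v : ι → E) i‖ ^ 2 =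
        ‖(if a ∈ A ∩ T then u else 0) + (if b ∈ A ∩ T then v else 0) -
          (if c ∈ A ∩ T then v else 0)‖ ^ 2 := by
    simp [T, sum_add_distrib, sum_sub_distrib]
  rw [sum_congr rfl fun A _ => htrace A,
    sum_comp_inter_eq_sum_powerset _ _ (fun S => ‖(if a ∈ S then u else 0) +
      (if b ∈ S then v else 0) - (if c ∈ S then v else 0)‖ ^ 2), hT, ← insert_empty (a := b)]
  simp only [sum_powerset_insert (a := c) (s := insert a (insert b ∅))
      (by simp [hac.symm, hbc.symm]),
    sum_powerset_insert (a := a) (s := insert b ∅) (by simp [hab]),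
    sum_powerset_insert (notMem_empty b), powerset_empty, sum_singleton]
  simp only [insert_empty_eq, notMem_empty, mem_insert, mem_singleton, hab, hac, hbc, hab.symm,
    hac.symm, hbc.symm, or_false, or_true, or_self, ↓reduceIte, add_zero, zero_add, sub_zero,
    zero_sub, sub_self, add_sub_cancel_right, norm_neg, norm_zero, ne_eq, OfNat.ofNat_ne_zero,
    not_false_eq_true, zero_pow, nsmul_eq_mul, inter_eq_right]
  rw [← hT, hsingle a (by simp [T]), hsingle b (by simp [T]), hsingle c (by simp [T]),
    hpair a (by simp [T]) b (by simp [T]) hab, hpair c (by simp [T]) a (by simp [T]) hac.symm,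
    ← htriple]
  push_cast
  ring

theorem parallelogram_of_sum_powersetCard {k : ℕ} (hk : 2 ≤ k) (hkι : k < Fintype.card ι)
    (h : ∀ x : ι → E, ((Fintype.card ι - 2).choose (k - 2) : ℝ) * ‖∑ i, x i‖ ^ 2 =
      ∑ A ∈ powersetCard k univ, ‖∑ i ∈ A, x i‖ ^ 2 -
        ((Fintype.card ι - 2).choose (k - 1) : ℝ) * ∑ i, ‖x i‖ ^ 2)
    (u v : E) : ‖u + v‖ ^ 2 + ‖u - v‖ ^ 2 = 2 * ‖u‖ ^ 2 + 2 * ‖v‖ ^ 2 := by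
  obtain ⟨a, b, c, hab, hac, hbc⟩ := Fintype.two_lt_card_iff.1 (by omega : 2 < Fintype.card ι)
  set x : ι → E := Pi.single a u + Pi.single b v - Pi.single c v with hx
  have hsum : ∑ i, x i = u := by simp [x, sum_add_distrib, sum_sub_distrib]
  have hnorm : ∑ i, ‖x i‖ ^ 2 = ‖u‖ ^ 2 + 2 * ‖v‖ ^ 2 := by
    rw [← sum_subset (subset_univ {c, a, b}) fun i _ hi => ?_]
    · simp only [x, Pi.sub_apply, Pi.add_apply, mem_insert, mem_singleton, sum_insert,
        sum_singleton, hab, hac, hbc, hab.symm, hac.symm, hbc.symm, or_self, not_false_eq_true,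
        ne_eq, Pi.single_eq_same, Pi.single_eq_of_ne, add_zero, zero_add, sub_zero, zero_sub,
        norm_neg]
      ring
    · simp only [mem_insert, mem_singleton, not_or] at hi
      simp [x, hi.1, hi.2.1, hi.2.2]
  have hpascal : (Fintype.card ι - 2).choose (k - 1) =
      (Fintype.card ι - 3).choose (k - 2) + (Fintype.card ι - 3).choose (k - 1) := by
    rw [show Fintype.card ι - 2 = Fintype.card ι - 3 + 1 by omega,
      show k - 1 = k - 2 + 1 by omega, Nat.choose_succ_succ]
  have hpos : (0 : ℝ) < (Fintype.card ι - 3).choose (k - 2) := by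
    exact_mod_cast Nat.choose_pos (by omega)
  have key := h x
  rw [hsum, hnorm, hpascal] at key
  have hsubsets := sum_powersetCard_norm_sum_single_add_single_sub_single hk hab hac hbc u v
  rw [← hx] at hsubsets
  push_cast at key
  refine (mul_right_inj' hpos.ne').1 ?_
  linear_combination -(hsubsets + key)

end Parallelogram

theorem stmt12_general {H : Type*} [NormedAddCommGroup H] [NormedSpace ℝ H]
    (n k : ℕ) (hk : 2 ≤ k) (hkn : k < n) :
    (∀ x y : H, ‖x + y‖ ^ 2 + ‖x - y‖ ^ 2 = 2 * ‖x‖ ^ 2 + 2 * ‖y‖ ^ 2) ↔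
      ∀ x : Fin n → H,
        ((n - 2).choose (k - 2) : ℝ) * ‖∑ i, x i‖ ^ 2 =
          (∑ A ∈ Finset.powersetCard k (Finset.univ : Finset (Fin n)),
            ‖∑ i ∈ A, x i‖ ^ 2) -
            ((n - 2).choose (k - 1) : ℝ) * ∑ i, ‖x i‖ ^ 2 := by
  constructor
  · intro hpar x
    let _ : InnerProductSpace ℝ H := InnerProductSpace.ofNorm ℝ fun a b => by
      linear_combination hpar a b
    have := sum_powersetCard_norm_sum_sq hk (by simp only [Fintype.card_fin]; omega) x
    rw [Fintype.card_fin] at this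
    linarith
  · intro h
    exact parallelogram_of_sum_powersetCard (ι := Fin n) hk (by simpa using hkn)
      (by simpa using h)

theorem stmt12 {H : Type*} [NormedAddCommGroup H] [NormedSpace ℝ H]
    (hdim : 2 ≤ Module.rank ℝ H) (n k : ℕ) (hk : 2 ≤ k) (hkn : k < n) :
    (∀ x y : H, ‖x + y‖ ^ 2 + ‖x - y‖ ^ 2 = 2 * ‖x‖ ^ 2 + 2 * ‖y‖ ^ 2) ↔
      ∀ x : Fin n → H,
        ((n - 2).choose (k - 2) : ℝ) * ‖∑ i, x i‖ ^ 2 =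
          (∑ A ∈ Finset.powersetCard k (Finset.univ : Finset (Fin n)),
            ‖∑ i ∈ A, x i‖ ^ 2) -
            ((n - 2).choose (k - 1) : ℝ) * ∑ i, ‖x i‖ ^ 2 :=
  stmt12_general n k hk hkn
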